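/- If J is orthogonal with J² = -I on V ⊕ V* and B is coisotropic with J(B⊥) ∩ B = 0, then J(B) = ((B ∩ JB) ⊕ J(B⊥)) and in particular B ∩ JB is a complement to J(B⊥) in J(B). -/

import Mathlib

open Module LinearMap

set_option maxSynthPendingDepth 3

/-- The symmetric pairing `⟨X+ξ, Y+η⟩ = (ξ(Y) + η(X))/2` on `V ⊕ V*`. -/
noncomputable def pair (V : Type) [AddCommGroup V] [Module ℝ V] :
    LinearMap.BilinForm ℝ (V × Module.Dual ℝ V) :=
  LinearMap.mk₂ ℝ (fun u v => (u.2 v.1 + v.2 u.1) / 2)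
    (by intro m₁ m₂ n; simp; ring)
    (by intro c m n; simp [smul_eq_mul]; ring)
    (by intro m n₁ n₂; simp; ring)
    (by intro c m n; simp [smul_eq_mul]; ring)

section Aux

variable (V : Type) [AddCommGroup V] [Module ℝ V]

lemma pair_apply (u v : V × Module.Dual ℝ V) :
    pair V u v = (u.2 v.1 + v.2 u.1) / 2 := rfl

lemma pair_isSymm : (pair V).IsSymm := by
  constructor
  intro u v
  simp [pair_apply]; ring

lemma pair_isRefl : (pair V).IsRefl := (pair_isSymm V).isRefl

lemma pair_nondeg [FiniteDimensional ℝ V] : (pair V).Nondegenerate := by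
  refine (pair_isRefl V).nondegenerate_iff_separatingLeft.mpr ?_
  intro m hm
  obtain ⟨x, ξ⟩ := m
  have hx : x = 0 := by
    rw [← Module.forall_dual_apply_eq_zero_iff ℝ x]
    intro φ
    have := hm (0, φ)
    simp [pair_apply] at this
    linarith
  have hξ : ξ = 0 := by
    ext y
    have := hm (y, 0)
    simp [pair_apply] at this
    simpa using this
  simp [hx, hξ]

lemma pair_orthogonal_sup (S T : Submodule ℝ (V × Module.Dual ℝ V)) :
    (pair V).orthogonal (S ⊔ T) = (pair V).orthogonal S ⊓ (pair V).orthogonal T := by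
  ext m
  constructor
  · intro hm
    exact ⟨fun n hn => hm n (Submodule.mem_sup_left hn),
           fun n hn => hm n (Submodule.mem_sup_right hn)⟩
  · rintro ⟨h1, h2⟩ n hn
    obtain ⟨s, hs, t, ht, rfl⟩ := Submodule.mem_sup.mp hn
    have := h1 s hs
    have := h2 t ht
    rw [map_add, LinearMap.add_apply]
    simp_all

end Aux

section AuxJ

variable (V : Type) [AddCommGroup V] [Module ℝ V] [FiniteDimensional ℝ V]

/-- `J` as a linear equivalence. -/
noncomputable def Jequiv (J : (V × Module.Dual ℝ V) →ₗ[ℝ] (V × Module.Dual ℝ V))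
    (hJ2 : ∀ u, J (J u) = -u) :
    (V × Module.Dual ℝ V) ≃ₗ[ℝ] (V × Module.Dual ℝ V) :=
  LinearEquiv.ofLinear J (-J)
    (LinearMap.ext fun u => by simp [hJ2 u])
    (LinearMap.ext fun u => by simp [hJ2 u])

omit [FiniteDimensional ℝ V] in
lemma map_orthogonal (J : (V × Module.Dual ℝ V) →ₗ[ℝ] (V × Module.Dual ℝ V))
    (hJ2 : ∀ u, J (J u) = -u)
    (horth : ∀ u v, pair V (J u) (J v) = pair V u v)
    (S : Submodule ℝ (V × Module.Dual ℝ V)) :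
    Submodule.map J ((pair V).orthogonal S) = (pair V).orthogonal (Submodule.map J S) := by
  ext x
  constructor
  · rintro ⟨y, hy, rfl⟩ n hn
    obtain ⟨s, hs, rfl⟩ := hn
    have := hy s hs
    simpa [LinearMap.BilinForm.IsOrtho, horth] using this
  · intro hx
    refine ⟨-J x, ?_, by simp [hJ2 x]⟩
    intro s hs
    have h1 : (pair V) (J s) (J (-J x)) = (pair V) s (-J x) := horth s (-J x)
    have h2 : J (-J x) = x := by simp [hJ2 x]
    rw [h2] at h1
    have h3 : (pair V) (J s) x = 0 := hx (J s) ⟨s, hs, rfl⟩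
    simpa [LinearMap.BilinForm.IsOrtho, h3] using h1.symm

end AuxJ

/-- If `J` is orthogonal with `J² = -I` and `B` is coisotropic with
`J(B⊥) ∩ B = 0`, then `J(B) = (B ∩ JB) ⊕ J(B⊥)`; in particular `B ∩ JB` is a
complement to `J(B⊥)` in `J(B)`. -/
theorem jb_decomposition
    (V : Type) [AddCommGroup V] [Module ℝ V] [FiniteDimensional ℝ V]
    (J : (V × Module.Dual ℝ V) →ₗ[ℝ] (V × Module.Dual ℝ V))
    (hJ2 : ∀ u, J (J u) = -u)
    (horth : ∀ u v, pair V (J u) (J v) = pair V u v)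
    (B : Submodule ℝ (V × Module.Dual ℝ V))
    (hco : (pair V).orthogonal B ≤ B)
    (htriv : Submodule.map J ((pair V).orthogonal B) ⊓ B = ⊥) :
    Submodule.map J B =
      (B ⊓ Submodule.map J B) ⊔ Submodule.map J ((pair V).orthogonal B) ∧
    (B ⊓ Submodule.map J B) ⊓ Submodule.map J ((pair V).orthogonal B) = ⊥ := by
  set O := (pair V).orthogonal B with hOdef
  set MJB := Submodule.map J B with hMJBdef
  set MJO := Submodule.map J O with hMJOdef
  have hrefl := pair_isRefl V
  have hnd := pair_nondeg V
  set n := finrank ℝ (V × Module.Dual ℝ V) with hn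
  -- basic finrank facts
  have hble : finrank ℝ B ≤ n := Submodule.finrank_le B
  have hOfin : finrank ℝ O = n - finrank ℝ B :=
    LinearMap.BilinForm.finrank_orthogonal hnd B
  have hJeq : (Jequiv V J hJ2 : (V × Module.Dual ℝ V) →ₗ[ℝ] (V × Module.Dual ℝ V)) = J := rfl
  have hJBfin : finrank ℝ MJB = finrank ℝ B := by
    rw [hMJBdef, ← hJeq]; exact LinearEquiv.finrank_map_eq _ B
  have hJOfin : finrank ℝ MJO = finrank ℝ O := by
    rw [hMJOdef, ← hJeq]; exact LinearEquiv.finrank_map_eq _ O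
  -- O ≤ B gives n - b ≤ b
  have hOleB : finrank ℝ O ≤ finrank ℝ B := Submodule.finrank_mono hco
  -- disjointness facts
  have hdisj2 : (B ⊓ MJB) ⊓ MJO = ⊥ := by
    rw [← le_bot_iff, ← htriv]
    exact le_inf (inf_le_right) (le_trans inf_le_left inf_le_left)
  have hdisj1 : O ⊓ MJO = ⊥ := by
    rw [← le_bot_iff, ← htriv]
    exact le_inf inf_le_right (le_trans inf_le_left hco)
  -- orthogonal identifications
  have hOO : (pair V).orthogonal O = B :=
    LinearMap.BilinForm.orthogonal_orthogonal hnd hrefl B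
  have hOMJB : (pair V).orthogonal MJB = MJO :=
    (map_orthogonal V J hJ2 horth B).symm
  have hMJBO : (pair V).orthogonal MJO = MJB := by
    rw [← hOMJB]
    exact LinearMap.BilinForm.orthogonal_orthogonal hnd hrefl MJB
  have hBMJB : B ⊓ MJB = (pair V).orthogonal (O ⊔ MJO) := by
    rw [pair_orthogonal_sup, hOO, hMJBO]
  -- finrank computations
  have hsupOfin : finrank ℝ (O ⊔ MJO : Submodule ℝ _) + 0 = finrank ℝ O + finrank ℝ MJO := by
    rw [← Submodule.finrank_sup_add_finrank_inf_eq O MJO, hdisj1, finrank_bot]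
  have hsupOle : finrank ℝ (O ⊔ MJO : Submodule ℝ _) ≤ n := Submodule.finrank_le _
  have hBMJBfin : finrank ℝ (B ⊓ MJB : Submodule ℝ _) = n - finrank ℝ (O ⊔ MJO : Submodule ℝ _) := by
    rw [hBMJB]
    exact LinearMap.BilinForm.finrank_orthogonal hnd _
  have hSfin : finrank ℝ ((B ⊓ MJB) ⊔ MJO : Submodule ℝ _) + 0
      = finrank ℝ (B ⊓ MJB : Submodule ℝ _) + finrank ℝ MJO := by
    rw [← Submodule.finrank_sup_add_finrank_inf_eq (B ⊓ MJB) MJO, hdisj2, finrank_bot]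
  -- the sup is contained in MJB
  have hSle : (B ⊓ MJB) ⊔ MJO ≤ MJB :=
    sup_le inf_le_right (Submodule.map_mono hco)
  have hfr : finrank ℝ MJB ≤ finrank ℝ ((B ⊓ MJB) ⊔ MJO : Submodule ℝ _) := by
    omega
  refine ⟨(Submodule.eq_of_le_of_finrank_le hSle hfr).symm, hdisj2⟩
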